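/- arXiv:2403.15120 — 2 statements merged into one kernel-verified Lean document; each statement's English description precedes it below -/
import Mathlib

section
/- The function f(S, I) = log₂(1 + 1/(S·I)) is jointly convex on the domain S > 0, I > 0. -/
/-!
Write `1 / (S * I) = exp (-log S - log I)`. The exponent `-log S - log I` is jointly convex, and
the softplus function `t ↦ log (1 + exp t)` is convex (its derivative is the logistic function) and
increasing, so their composition is convex.
-/

open Real Set

lemma hasDerivAt_log_one_add_exp (t : ℝ) :
    HasDerivAt (fun t => log (1 + exp t)) (exp t / (1 + exp t)) t :=
  ((hasDerivAt_exp t).const_add 1).log (by positivity)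

lemma monotone_exp_div_one_add_exp : Monotone fun t : ℝ => exp t / (1 + exp t) := by
  intro a b hab
  have hexp : exp a ≤ exp b := exp_le_exp.mpr hab
  rw [div_le_div_iff₀ (by positivity) (by positivity)]
  nlinarith

lemma convexOn_log_one_add_exp : ConvexOn ℝ univ fun t : ℝ => log (1 + exp t) := by
  refine Monotone.convexOn_univ_of_deriv
    (fun t => (hasDerivAt_log_one_add_exp t).differentiableAt) ?_
  rw [funext fun t => (hasDerivAt_log_one_add_exp t).deriv]
  exact monotone_exp_div_one_add_exp

lemma monotone_log_one_add_exp : Monotone fun t : ℝ => log (1 + exp t) := fun _ _ hab =>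
  log_le_log (by positivity) (by gcongr)

lemma ConvexOn.log_one_add_exp {E : Type*} [AddCommMonoid E] [Module ℝ E] {s : Set E}
    {f : E → ℝ} (hf : ConvexOn ℝ s f) : ConvexOn ℝ s fun x => log (1 + exp (f x)) :=
  ⟨hf.1, fun _ hx _ hy _ _ ha hb hab => (monotone_log_one_add_exp (hf.2 hx hy ha hb hab)).trans
    (convexOn_log_one_add_exp.2 trivial trivial ha hb hab)⟩

lemma convexOn_neg_log_fst_sub_log_snd :
    ConvexOn ℝ {p : ℝ × ℝ | 0 < p.1 ∧ 0 < p.2} fun p => -log p.1 - log p.2 := by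
  have hs : Convex ℝ {p : ℝ × ℝ | 0 < p.1 ∧ 0 < p.2} := (convex_Ioi 0).prod (convex_Ioi 0)
  have hneg : ConvexOn ℝ (Ioi 0) fun x => -log x := strictConcaveOn_log_Ioi.concaveOn.neg
  simpa only [sub_eq_add_neg, Pi.add_def, Function.comp_def, LinearMap.fst_apply,
    LinearMap.snd_apply] using
    ((hneg.comp_linearMap (LinearMap.fst ℝ ℝ ℝ)).subset (fun p hp => hp.1) hs).add
      ((hneg.comp_linearMap (LinearMap.snd ℝ ℝ ℝ)).subset (fun p hp => hp.2) hs)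

lemma one_div_mul_eq_exp_neg_log_sub_log {x y : ℝ} (hx : 0 < x) (hy : 0 < y) :
    1 / (x * y) = exp (-log x - log y) := by
  rw [← neg_add', exp_neg, exp_add, exp_log hx, exp_log hy, one_div]

/-- The function `f(S, I) = log₂(1 + 1/(S·I))` is jointly convex on the domain
`S > 0, I > 0`. -/
theorem convexOn_log2_one_add_inv_mul :
    ConvexOn ℝ {p : ℝ × ℝ | 0 < p.1 ∧ 0 < p.2}
      (fun p : ℝ × ℝ => Real.log (1 + 1 / (p.1 * p.2)) / Real.log 2) := by
  have hlog : ConvexOn ℝ {p : ℝ × ℝ | 0 < p.1 ∧ 0 < p.2} fun p => log (1 + 1 / (p.1 * p.2)) :=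
    convexOn_neg_log_fst_sub_log_snd.log_one_add_exp.congr fun p hp => by
      rw [one_div_mul_eq_exp_neg_log_sub_log hp.1 hp.2]
  simpa only [smul_eq_mul, inv_mul_eq_div] using
    hlog.smul (inv_nonneg.mpr (log_nonneg one_le_two))
end

section
/- For all S, I, S̃, Ĩ > 0, the first-order Taylor bound log₂(1 + 1/(S I)) ≥ log₂(1 + 1/(S̃ Ĩ)) − (S − S̃)/(ln 2 · (S̃² Ĩ + S̃)) − (I − Ĩ)/(ln 2 · (Ĩ² S̃ + Ĩ)) holds. -/
/-!
Write `S = S̃ a`, `I = Ĩ b` and `c = S̃ Ĩ`. The gradient terms add up to `(a + b - 2) / (c + 1)`,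
and since `t ↦ log (1 + 1/t)` is decreasing, AM–GM `a b ≤ m²` with `m = (a + b) / 2` reduces the
claim to the one-variable inequality `log (1 + 1/(c m²)) ≥ log (1 + 1/c) - 2 (m - 1) / (c + 1)`.
This is the tangent line at `m = 1` of `s ↦ log (1 + 1/(c s²))`, which is convex on `s > 0`
because its derivative `-2 / (s (c s² + 1))` is increasing.
-/

open Real Set

theorem ConvexOn.add_mul_sub_le_of_hasDerivAt {D : Set ℝ} {f : ℝ → ℝ} {x y f' : ℝ}
    (hf : ConvexOn ℝ D f) (hx : x ∈ D) (hy : y ∈ D) (hf' : HasDerivAt f f' x) :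
    f x + f' * (y - x) ≤ f y := by
  rcases lt_trichotomy x y with hxy | rfl | hxy
  · have h := hf.le_slope_of_hasDerivAt hx hy hxy hf'
    rw [slope_def_field, le_div_iff₀ (sub_pos.2 hxy)] at h
    linarith
  · simp
  · have h := hf.slope_le_of_hasDerivAt hy hx hxy hf'
    rw [slope_def_field, div_le_iff₀ (sub_pos.2 hxy)] at h
    linarith

theorem hasDerivAt_log_one_add_inv_mul_sq {c x : ℝ} (hc : 0 < c) (hx : 0 < x) :
    HasDerivAt (fun s => log (1 + 1 / (c * s ^ 2))) (-2 / (x * (c * x ^ 2 + 1))) x := by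
  have hcx : 0 < c * x ^ 2 := by positivity
  have h : HasDerivAt (fun s => 1 + 1 / (c * s ^ 2)) (-(c * (2 * x)) / (c * x ^ 2) ^ 2) x := by
    simpa [one_div] using (((hasDerivAt_pow 2 x).const_mul c).inv hcx.ne').const_add 1
  convert h.log (by positivity) using 1
  field_simp

theorem convexOn_log_one_add_inv_mul_sq {c : ℝ} (hc : 0 < c) :
    ConvexOn ℝ (Ioi 0) (fun s => log (1 + 1 / (c * s ^ 2))) := by
  have hderiv (x : ℝ) (hx : 0 < x) := hasDerivAt_log_one_add_inv_mul_sq hc hx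
  refine MonotoneOn.convexOn_of_deriv (convex_Ioi 0) ?_ ?_ ?_
  · exact fun x hx => (hderiv x hx).continuousAt.continuousWithinAt
  · rw [interior_Ioi]
    exact fun x hx => (hderiv x hx).differentiableAt.differentiableWithinAt
  · rw [interior_Ioi]
    intro x (hx : 0 < x) y (hy : 0 < y) hxy
    rw [(hderiv x hx).deriv, (hderiv y hy).deriv, neg_div, neg_div, neg_le_neg_iff]
    gcongr

theorem log_one_add_inv_sub_le_log_one_add_inv_mul_sq {c s : ℝ} (hc : 0 < c) (hs : 0 < s) :
    log (1 + 1 / c) - 2 * (s - 1) / (c + 1) ≤ log (1 + 1 / (c * s ^ 2)) := by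
  have h := (convexOn_log_one_add_inv_mul_sq hc).add_mul_sub_le_of_hasDerivAt
    (mem_Ioi.2 one_pos) (mem_Ioi.2 hs) (hasDerivAt_log_one_add_inv_mul_sq hc one_pos)
  simp only [one_pow, mul_one, one_mul] at h
  convert h using 2
  ring

theorem log_one_add_inv_mul_sub_le {S I St It : ℝ}
    (hS : 0 < S) (hI : 0 < I) (hSt : 0 < St) (hIt : 0 < It) :
    log (1 + 1 / (St * It)) - (S - St) / (St ^ 2 * It + St) - (I - It) / (It ^ 2 * St + It) ≤
      log (1 + 1 / (S * I)) := by
  set c := St * It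
  set m := (S / St + I / It) / 2
  have hc : 0 < c := mul_pos hSt hIt
  have hm : 0 < m := by positivity
  have hamgm : S * I ≤ c * m ^ 2 := by
    have h : c * m ^ 2 - S * I = c * ((S / St - I / It) / 2) ^ 2 := by
      simp only [c, m]
      field_simp
      ring
    linarith [h, mul_nonneg hc.le (sq_nonneg ((S / St - I / It) / 2))]
  have hgrad : (S - St) / (St ^ 2 * It + St) + (I - It) / (It ^ 2 * St + It) =
      2 * (m - 1) / (c + 1) := by
    simp only [c, m]
    field_simp
    ring
  calc _ = log (1 + 1 / c) - 2 * (m - 1) / (c + 1) := by rw [sub_sub, hgrad]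
    _ ≤ log (1 + 1 / (c * m ^ 2)) := log_one_add_inv_sub_le_log_one_add_inv_mul_sq hc hm
    _ ≤ log (1 + 1 / (S * I)) := by gcongr

/-- First-order Taylor lower bound of the jointly convex function
`(S, I) ↦ log₂(1 + 1/(S I))` at the point `(S̃, Ĩ)`. -/
theorem log2_taylor_lower_bound (S I St It : ℝ)
    (hS : 0 < S) (hI : 0 < I) (hSt : 0 < St) (hIt : 0 < It) :
    Real.logb 2 (1 + 1 / (S * I)) ≥
      Real.logb 2 (1 + 1 / (St * It))
        - (S - St) / (Real.log 2 * (St ^ 2 * It + St))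
        - (I - It) / (Real.log 2 * (It ^ 2 * St + It)) := by
  rw [ge_iff_le, logb, logb, div_mul_eq_div_div_swap (S - St), div_mul_eq_div_div_swap (I - It),
    ← sub_div, ← sub_div]
  exact div_le_div_of_nonneg_right (log_one_add_inv_mul_sub_le hS hI hSt hIt)
    (log_pos one_lt_two).le
end
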